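/- For n ≥ 5, every element of G₂ = {M ∈ M_n(ℤ) : M·𝟙 = 0, Mᵀ = -M} is an integer linear combination of commutators ⟨A, B⟩ = AB - BA with A ∈ G₁ and B ∈ G₃, where G₁ = {M : M·𝟙 = 0, Mᵀ = M} and G₃ = {M : M·𝟙 = 0, Mᵀ = M, tr(M) = 0}. That is, the ℤ-span of ⟨G₁, G₃⟩ equals G₂. -/

import Mathlib

open Matrix

/-!
Fix a base index `e`. A matrix with zero row and column sums is `∑ M i j • Dᵢⱼ`, where
`Dᵢⱼ = (eᵢ - eₑ)(eⱼ - eₑ)ᵀ`; if it is moreover skew, pairing `(i, j)` with `(j, i)` turns this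
into `M = ∑_{i < j} M i j • Y_{ije}`. Each `Y_{ijk}` is the bracket `⟨X_{jk}, X_{ij} - X_{pq}⟩`,
where `p, q` are two further indices (this is where `n ≥ 5` enters): `X_{pq}` commutes with
`X_{jk}`, and subtracting it makes the second factor traceless.
-/

/-- `X_{ij} = E_{ii} + E_{jj} - E_{ij} - E_{ji}`. -/
def Xmat (n : ℕ) (i j : Fin n) : Matrix (Fin n) (Fin n) ℤ :=
  Matrix.single i i 1 + Matrix.single j j 1
    - Matrix.single i j 1 - Matrix.single j i 1

/-- `Y_{ijk} = (E_{ij} - E_{ji}) - (E_{ik} - E_{ki}) + (E_{jk} - E_{kj})`. -/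
def Ymat (n : ℕ) (i j k : Fin n) : Matrix (Fin n) (Fin n) ℤ :=
  (Matrix.single i j 1 - Matrix.single j i 1)
    - (Matrix.single i k 1 - Matrix.single k i 1)
    + (Matrix.single j k 1 - Matrix.single k j 1)

theorem Finset.sum_sum_eq_sum_lt_add_swap_add_diag {ι M : Type*} [Fintype ι] [LinearOrder ι]
    [AddCommMonoid M] (f : ι → ι → M) :
    ∑ i, ∑ j, f i j = ∑ i, ∑ j with i < j, (f i j + f j i) + ∑ i, f i i := by
  have htri : ∀ i j, f i j = (if i < j then f i j else 0) + (if j < i then f i j else 0) +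
      (if i = j then f i j else 0) := by
    intro i j
    rcases lt_trichotomy i j with h | rfl | h
    · simp [h, h.ne, h.not_gt]
    · simp
    · simp [h, h.ne', h.not_gt]
  have hswap : ∑ i, ∑ j with j < i, f i j = ∑ i, ∑ j with i < j, f j i :=
    Finset.sum_comm' (by simp)
  conv_lhs => rw [Finset.sum_congr rfl fun i _ => Finset.sum_congr rfl fun j _ => htri i j]
  simp only [Finset.sum_add_distrib, ← Finset.sum_filter, hswap, Finset.filter_eq,
    Finset.mem_univ, if_true, Finset.sum_singleton, add_assoc]

theorem Finset.exists_ne_notMem_of_card_add_two_le {α : Type*} [Fintype α] [DecidableEq α]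
    (s : Finset α) (h : s.card + 2 ≤ Fintype.card α) : ∃ p q, p ≠ q ∧ p ∉ s ∧ q ∉ s := by
  have hcard : 1 < sᶜ.card := by rw [Finset.card_compl]; omega
  obtain ⟨p, hp, q, hq, hpq⟩ := Finset.one_lt_card.mp hcard
  exact ⟨p, q, hpq, Finset.mem_compl.mp hp, Finset.mem_compl.mp hq⟩

theorem Matrix.eq_sum_smul_single_sub_of_mulVec_eq_zero_of_vecMul_eq_zero {ι R : Type*}
    [Fintype ι] [DecidableEq ι] [CommRing R] (M : Matrix ι ι R) (hrow : M *ᵥ 1 = 0)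
    (hcol : 1 ᵥ* M = 0) (e : ι) :
    M = ∑ i, ∑ j, M i j • (single i j 1 - single i e 1 - single e j 1 + single e e 1) := by
  have hr : ∀ i, ∑ j, M i j = 0 := fun i => by simpa [mulVec, dotProduct] using congrFun hrow i
  have hc : ∀ j, ∑ i, M i j = 0 := fun j => by simpa [vecMul, dotProduct] using congrFun hcol j
  ext a b
  simp [Matrix.sum_apply, single_apply, mul_sub, Finset.sum_add_distrib, Finset.sum_sub_distrib,
    ite_and, hr, hc]

section Generators

variable {n : ℕ}

theorem Xmat_transpose (i j : Fin n) : (Xmat n i j)ᵀ = Xmat n i j := by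
  simp only [Xmat, transpose_sub, transpose_add, transpose_single]
  abel

theorem Xmat_mulVec_one (i j : Fin n) : Xmat n i j *ᵥ (fun _ => 1) = 0 := by
  ext a
  by_cases hi : a = i <;> by_cases hj : a = j <;>
    simp [Xmat, sub_mulVec, add_mulVec, single_mulVec, Function.update, hi, hj]

theorem Xmat_trace {i j : Fin n} (h : i ≠ j) : (Xmat n i j).trace = 2 := by
  simp [Xmat, trace_single_eq_of_ne _ _ _ h, trace_single_eq_of_ne _ _ _ h.symm]

theorem Xmat_commute {i j p q : Fin n} (hpi : p ≠ i) (hpj : p ≠ j) (hqi : q ≠ i) (hqj : q ≠ j) :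
    Commute (Xmat n i j) (Xmat n p q) := by
  simp only [Commute, SemiconjBy, Xmat, sub_mul, add_mul, mul_sub, mul_add,
    single_mul_single_of_ne, hpi, hpj, hqi, hqj, hpi.symm, hpj.symm, hqi.symm, hqj.symm,
    Ne, not_false_iff]

theorem Xmat_mul_Xmat_sub_Xmat_mul_Xmat {i j k : Fin n} (hij : i ≠ j) (hik : i ≠ k)
    (hjk : j ≠ k) : Xmat n j k * Xmat n i j - Xmat n i j * Xmat n j k = Ymat n i j k := by
  simp only [Xmat, Ymat, sub_mul, add_mul, mul_sub, mul_add, single_mul_single_same,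
    single_mul_single_of_ne, hij, hik, hjk, hij.symm, hik.symm, hjk.symm, Ne, not_false_iff,
    mul_one]
  abel

theorem Ymat_eq_zero {i j k : Fin n} (h : i = j ∨ i = k ∨ j = k) : Ymat n i j k = 0 := by
  rcases h with rfl | rfl | rfl <;> simp [Ymat]

theorem Ymat_eq_sub (i j e : Fin n) :
    Ymat n i j e = (single i j 1 - single i e 1 - single e j 1 + single e e 1) -
      (single j i 1 - single j e 1 - single e i 1 + single e e 1) := by
  simp only [Ymat]
  abel

theorem eq_sum_lt_smul_Ymat (M : Matrix (Fin n) (Fin n) ℤ) (h1 : M *ᵥ (fun _ => 1) = 0)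
    (h2 : Mᵀ = -M) (e : Fin n) : M = ∑ i, ∑ j with i < j, M i j • Ymat n i j e := by
  have hcol : 1 ᵥ* M = 0 := by
    rw [← mulVec_transpose, h2, neg_mulVec]
    exact neg_eq_zero.mpr h1
  have hskew : ∀ i j, M j i = -M i j := fun i j => by simpa using congrFun (congrFun h2 i) j
  have hdiag : ∀ i, M i i = 0 := fun i => by linarith [hskew i i]
  conv_lhs => rw [eq_sum_smul_single_sub_of_mulVec_eq_zero_of_vecMul_eq_zero M h1 hcol e,
    Finset.sum_sum_eq_sum_lt_add_swap_add_diag]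
  simp only [hdiag, zero_smul, Finset.sum_const_zero, add_zero]
  refine Finset.sum_congr rfl fun i _ => Finset.sum_congr rfl fun j _ => ?_
  rw [hskew i j, neg_smul, ← sub_eq_add_neg, ← smul_sub, Ymat_eq_sub]

theorem Ymat_mem_span_brackets (hn : 5 ≤ n) (i j k : Fin n) :
    Ymat n i j k ∈ Submodule.span ℤ
      {C | ∃ A B : Matrix (Fin n) (Fin n) ℤ,
        (A.mulVec (fun _ => 1) = 0 ∧ Aᵀ = A) ∧
        (B.mulVec (fun _ => 1) = 0 ∧ Bᵀ = B ∧ B.trace = 0) ∧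
        C = A * B - B * A} := by
  by_cases hdeg : i = j ∨ i = k ∨ j = k
  · rw [Ymat_eq_zero hdeg]
    exact Submodule.zero_mem _
  simp only [not_or] at hdeg
  obtain ⟨hij, hik, hjk⟩ := hdeg
  have hcard : ({i, j, k} : Finset (Fin n)).card + 2 ≤ Fintype.card (Fin n) := by
    rw [Fintype.card_fin]
    linarith [Finset.card_le_three (a := i) (b := j) (c := k)]
  obtain ⟨p, q, hpq, hp, hq⟩ := Finset.exists_ne_notMem_of_card_add_two_le _ hcard
  simp only [Finset.mem_insert, Finset.mem_singleton, not_or] at hp hq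
  refine Submodule.subset_span ⟨Xmat n j k, Xmat n i j - Xmat n p q,
    ⟨Xmat_mulVec_one j k, Xmat_transpose j k⟩,
    ⟨by rw [sub_mulVec, Xmat_mulVec_one, Xmat_mulVec_one, sub_zero],
      by rw [transpose_sub, Xmat_transpose, Xmat_transpose],
      by rw [trace_sub, Xmat_trace hij, Xmat_trace hpq, sub_self]⟩, ?_⟩
  rw [mul_sub, sub_mul, (Xmat_commute hp.2.1 hp.2.2 hq.2.1 hq.2.2).eq, sub_sub_sub_cancel_right,
    Xmat_mul_Xmat_sub_Xmat_mul_Xmat hij hik hjk]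

end Generators

/-- For `n ≥ 5`, every element of `G₂` (skew matrices killing `𝟙`) is a ℤ-linear
combination of brackets `⟨A,B⟩` with `A ∈ G₁` and `B ∈ G₃`. -/
theorem G2_eq_bracket_G1_G3 (n : ℕ) (hn : 5 ≤ n) (M : Matrix (Fin n) (Fin n) ℤ)
    (h1 : M.mulVec (fun _ => 1) = 0) (h2 : Mᵀ = -M) :
    M ∈ Submodule.span ℤ
      {C | ∃ A B : Matrix (Fin n) (Fin n) ℤ,
        (A.mulVec (fun _ => 1) = 0 ∧ Aᵀ = A) ∧
        (B.mulVec (fun _ => 1) = 0 ∧ Bᵀ = B ∧ B.trace = 0) ∧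
        C = A * B - B * A} := by
  rw [eq_sum_lt_smul_Ymat M h1 h2 ⟨0, by omega⟩]
  exact Submodule.sum_mem _ fun i _ => Submodule.sum_mem _ fun j _ =>
    Submodule.smul_mem _ _ (Ymat_mem_span_brackets hn i j _)
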